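/- Let M, D, A be symmetric real N×N matrices with M, D positive definite and A positive semidefinite, and let (u_dG, v_dG) solve the dG1 discrete problem with data f ∈ L²(0,T), initial data u₀, v₀. Then the stability bound holds: |(u_dG, v_dG)|²_B ≤ C (Σ_n ‖D^{-1/2} f‖²_{L²(I_n)} + |A^{1/2}u₀|² + |M^{1/2}v₀|²), where C is independent of the partition, the time steps, and the polynomial degrees r_n ≥ 1. -/

import Mathlib

open Matrix MeasureTheory

/-- A family of slab functions is a piecewise polynomial of degree `r n`
on each slab. -/
def IsPwPoly (d : ℕ) (r : ℕ → ℕ) (u : ℕ → ℝ → Fin d → ℝ) : Prop :=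
  ∀ n, ∃ p : Fin d → Polynomial ℝ,
    (∀ i, (p i).natDegree ≤ r n) ∧ ∀ s i, u n s i = (p i).eval s

/-- The dG1 bilinear form `ℬ((u,v),(w,z))` on a partition with nodes `t n`
and `N` slabs `I_n = (t n, t (n+1)]`. -/
noncomputable def dgB (d N : ℕ) (t : ℕ → ℝ) (M D A : Matrix (Fin d) (Fin d) ℝ)
    (u v w z : ℕ → ℝ → Fin d → ℝ) : ℝ :=
  (∑ n ∈ Finset.range N, ∫ s in (t n)..(t (n + 1)),
      (deriv (u n) s - v n s) ⬝ᵥ w n s)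
    + (∑ n ∈ Finset.Ico 1 N, (u n (t n) - u (n - 1) (t n)) ⬝ᵥ w n (t n))
    + u 0 (t 0) ⬝ᵥ w 0 (t 0)
    + (∑ n ∈ Finset.range N, ∫ s in (t n)..(t (n + 1)),
        (M.mulVec (deriv (v n) s) + D.mulVec (v n s) + A.mulVec (u n s)) ⬝ᵥ z n s)
    + (∑ n ∈ Finset.Ico 1 N, M.mulVec (v n (t n) - v (n - 1) (t n)) ⬝ᵥ z n (t n))
    + M.mulVec (v 0 (t 0)) ⬝ᵥ z 0 (t 0)

/-- The dG1 energy seminorm squared `|(u,v)|_ℬ²`; note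
`|M^{1/2} y|² = y ⬝ᵥ M y`, `|A^{1/2} y|² = y ⬝ᵥ A y` and the integrand
`|D^{1/2} v|² = v ⬝ᵥ D v`. -/
noncomputable def rhoSq (d N : ℕ) (t : ℕ → ℝ) (M D A : Matrix (Fin d) (Fin d) ℝ)
    (u v : ℕ → ℝ → Fin d → ℝ) : ℝ :=
  (∑ n ∈ Finset.range N, ∫ s in (t n)..(t (n + 1)), v n s ⬝ᵥ D.mulVec (v n s))
    + (1 / 2) * (v 0 (t 0) ⬝ᵥ M.mulVec (v 0 (t 0)))
    + (1 / 2) * ∑ n ∈ Finset.Ico 1 N,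
        (v n (t n) - v (n - 1) (t n)) ⬝ᵥ M.mulVec (v n (t n) - v (n - 1) (t n))
    + (1 / 2) * (v (N - 1) (t N) ⬝ᵥ M.mulVec (v (N - 1) (t N)))
    + (1 / 2) * (u 0 (t 0) ⬝ᵥ A.mulVec (u 0 (t 0)))
    + (1 / 2) * ∑ n ∈ Finset.Ico 1 N,
        (u n (t n) - u (n - 1) (t n)) ⬝ᵥ A.mulVec (u n (t n) - u (n - 1) (t n))
    + (1 / 2) * (u (N - 1) (t N) ⬝ᵥ A.mulVec (u (N - 1) (t N)))

/-!
Testing the dG1 equations with `(w, z) = (A u, v)` turns the left-hand side into `|(u, v)|²_B`: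
on each slab the time derivatives integrate to differences of the energies `½ uᵀAu` and
`½ vᵀMv`, and together with the upwind jump terms these telescope into half the squared jumps
plus half the initial and final energies. The right-hand side is bounded by Young's inequality
with weight `¼`, `f ⬝ v ≤ D⁻¹f ⬝ f + ¼ v ⬝ Dv` and likewise for the initial data, and
the `¼`-terms are absorbed into half of `|(u, v)|²_B`. Hence `C = 2` works.
-/

namespace Matrix

lemma PosSemidef.isSymm {n : Type*} {S : Matrix n n ℝ} (hS : S.PosSemidef) : S.IsSymm :=
  isHermitian_iff_isSymm.1 hS.isHermitian

variable {n : Type*} [Fintype n]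

lemma IsSymm.dotProduct_mulVec_comm {R : Type*} [CommSemiring R] {S : Matrix n n R}
    (hS : S.IsSymm) (x y : n → R) : x ⬝ᵥ S *ᵥ y = y ⬝ᵥ S *ᵥ x := by
  rw [← dotProduct_transpose_mulVec, hS.eq]

lemma IsSymm.half_quad_sub_half_quad_add {S : Matrix n n ℝ} (hS : S.IsSymm) (x y : n → ℝ) :
    1 / 2 * (y ⬝ᵥ S *ᵥ y) - 1 / 2 * (x ⬝ᵥ S *ᵥ x) + (x - y) ⬝ᵥ S *ᵥ x
      = 1 / 2 * ((x - y) ⬝ᵥ S *ᵥ (x - y)) := by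
  have := hS.dotProduct_mulVec_comm x y
  simp only [mulVec_sub, sub_dotProduct, dotProduct_sub]
  linarith

lemma PosSemidef.dotProduct_mulVec_le {S : Matrix n n ℝ} (hS : S.PosSemidef) (x y : n → ℝ) :
    x ⬝ᵥ S *ᵥ y ≤ x ⬝ᵥ S *ᵥ x + 1 / 4 * (y ⬝ᵥ S *ᵥ y) := by
  have hsq := hS.dotProduct_mulVec_nonneg (x - (1 / 2 : ℝ) • y)
  have := hS.isSymm.dotProduct_mulVec_comm x y
  simp only [star_trivial, mulVec_sub, mulVec_smul, sub_dotProduct, dotProduct_sub,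
    smul_dotProduct, dotProduct_smul, smul_eq_mul] at hsq
  linarith

lemma PosDef.dotProduct_le [DecidableEq n] {D : Matrix n n ℝ} (hD : D.PosDef) (x y : n → ℝ) :
    x ⬝ᵥ y ≤ D⁻¹ *ᵥ x ⬝ᵥ x + 1 / 4 * (y ⬝ᵥ D *ᵥ y) := by
  have hDDinv : D *ᵥ D⁻¹ *ᵥ x = x := by
    rw [mulVec_mulVec, mul_nonsing_inv D (isUnit_iff_ne_zero.2 hD.det_pos.ne'), one_mulVec]
  simpa [hDDinv, hD.posSemidef.isSymm.dotProduct_mulVec_comm (D⁻¹ *ᵥ x) y, dotProduct_comm y]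
    using hD.posSemidef.dotProduct_mulVec_le (D⁻¹ *ᵥ x) y

end Matrix

section Calculus

variable {n : Type*} [Fintype n]

theorem HasDerivAt.dotProduct {f g : ℝ → n → ℝ} {f' g' : n → ℝ} {x : ℝ}
    (hf : HasDerivAt f f' x) (hg : HasDerivAt g g' x) :
    HasDerivAt (fun s => f s ⬝ᵥ g s) (f' ⬝ᵥ g x + f x ⬝ᵥ g') x := by
  simp only [_root_.dotProduct, ← Finset.sum_add_distrib]
  exact HasDerivAt.fun_sum fun i _ => (hasDerivAt_pi.1 hf i).mul (hasDerivAt_pi.1 hg i)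

theorem HasDerivAt.matrix_mulVec {m : Type*} (S : Matrix m n ℝ) {g : ℝ → n → ℝ}
    {g' : n → ℝ} {x : ℝ} (hg : HasDerivAt g g' x) :
    HasDerivAt (fun s => S *ᵥ g s) (S *ᵥ g') x :=
  hasDerivAt_pi.2 fun i => by
    have h := (hasDerivAt_const x (S i)).dotProduct hg
    simp only [zero_dotProduct, zero_add] at h
    exact h

theorem HasDerivAt.dotProduct_mulVec_self {S : Matrix n n ℝ} (hS : S.IsSymm)
    {g : ℝ → n → ℝ} {g' : n → ℝ} {x : ℝ} (hg : HasDerivAt g g' x) :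
    HasDerivAt (fun s => g s ⬝ᵥ S *ᵥ g s) (2 * (g' ⬝ᵥ S *ᵥ g x)) x := by
  convert hg.dotProduct (hg.matrix_mulVec S) using 1
  rw [hS.dotProduct_mulVec_comm g']
  ring

theorem integral_deriv_dotProduct_mulVec_self {S : Matrix n n ℝ} (hS : S.IsSymm)
    {g : ℝ → n → ℝ} (hg : ContDiff ℝ 1 g) (a b : ℝ) :
    ∫ s in a..b, deriv g s ⬝ᵥ S *ᵥ g s
      = 1 / 2 * (g b ⬝ᵥ S *ᵥ g b) - 1 / 2 * (g a ⬝ᵥ S *ᵥ g a) := by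
  have hderiv (s : ℝ) :
      HasDerivAt (fun s => 1 / 2 * (g s ⬝ᵥ S *ᵥ g s)) (deriv g s ⬝ᵥ S *ᵥ g s) s := by
    have h := (hg.differentiable one_ne_zero s).hasDerivAt.dotProduct_mulVec_self hS
    simpa using h.const_mul (1 / 2 : ℝ)
  have hcont : Continuous fun s => deriv g s ⬝ᵥ S *ᵥ g s :=
    (hg.continuous_deriv le_rfl).dotProduct (continuous_const.matrix_mulVec hg.continuous)
  rw [intervalIntegral.integral_eq_sub_of_hasDerivAt (fun s _ => hderiv s)
    (hcont.intervalIntegrable a b)]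

end Calculus

section Energy

variable {n : Type*} [Fintype n]

theorem integral_slab_energy {M D A : Matrix n n ℝ} (hM : M.IsSymm) (hA : A.IsSymm)
    {u v : ℝ → n → ℝ} (hu : ContDiff ℝ 1 u) (hv : ContDiff ℝ 1 v) (a b : ℝ) :
    (∫ s in a..b, (deriv u s - v s) ⬝ᵥ A *ᵥ u s)
      + (∫ s in a..b, (M *ᵥ deriv v s + D *ᵥ v s + A *ᵥ u s) ⬝ᵥ v s)
    = (1 / 2 * (u b ⬝ᵥ A *ᵥ u b) - 1 / 2 * (u a ⬝ᵥ A *ᵥ u a))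
      + (1 / 2 * (v b ⬝ᵥ M *ᵥ v b) - 1 / 2 * (v a ⬝ᵥ M *ᵥ v a))
      + ∫ s in a..b, v s ⬝ᵥ D *ᵥ v s := by
  have hu' := hu.continuous_deriv le_rfl
  have hv' := hv.continuous_deriv le_rfl
  have hu₀ := hu.continuous
  have hv₀ := hv.continuous
  have hint : ∀ {F : ℝ → ℝ}, Continuous F → IntervalIntegrable F volume a b :=
    fun hF => hF.intervalIntegrable a b
  have hpt (s : ℝ) :
      (deriv u s - v s) ⬝ᵥ A *ᵥ u s + (M *ᵥ deriv v s + D *ᵥ v s + A *ᵥ u s) ⬝ᵥ v s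
        = deriv u s ⬝ᵥ A *ᵥ u s + deriv v s ⬝ᵥ M *ᵥ v s + v s ⬝ᵥ D *ᵥ v s := by
    rw [sub_dotProduct, add_dotProduct, add_dotProduct, dotProduct_comm (M *ᵥ _),
      hM.dotProduct_mulVec_comm, dotProduct_comm (D *ᵥ _), dotProduct_comm (A *ᵥ _)]
    ring
  rw [← intervalIntegral.integral_add (hint (by fun_prop)) (hint (by fun_prop))]
  simp_rw [hpt]
  rw [intervalIntegral.integral_add (hint (by fun_prop)) (hint (by fun_prop)),
    intervalIntegral.integral_add (hint (by fun_prop)) (hint (by fun_prop)),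
    integral_deriv_dotProduct_mulVec_self hA hu, integral_deriv_dotProduct_mulVec_self hM hv]

end Energy

namespace Matrix.IsSymm

variable {n : Type*} [Fintype n] {S : Matrix n n ℝ}

/-- Upwind jump identity; `q k m` stands for the value of the `k`-th slab function at the
`m`-th node. -/
theorem dg_jump_telescope (hS : S.IsSymm) {N : ℕ} (hN : 1 ≤ N) (q : ℕ → ℕ → n → ℝ) :
    (∑ k ∈ Finset.range N,
        (1 / 2 * (q k (k + 1) ⬝ᵥ S *ᵥ q k (k + 1)) - 1 / 2 * (q k k ⬝ᵥ S *ᵥ q k k)))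
      + (∑ k ∈ Finset.Ico 1 N, (q k k - q (k - 1) k) ⬝ᵥ S *ᵥ q k k)
      + q 0 0 ⬝ᵥ S *ᵥ q 0 0
    = 1 / 2 * (q 0 0 ⬝ᵥ S *ᵥ q 0 0)
      + 1 / 2 * ∑ k ∈ Finset.Ico 1 N, (q k k - q (k - 1) k) ⬝ᵥ S *ᵥ (q k k - q (k - 1) k)
      + 1 / 2 * (q (N - 1) N ⬝ᵥ S *ᵥ q (N - 1) N) := by
  induction N, hN using Nat.le_induction with
  | base =>
    simp only [Finset.range_one, Finset.sum_singleton, Finset.Ico_self, Finset.sum_empty]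
    ring
  | succ N hN ih =>
    rw [Finset.sum_range_succ, Finset.sum_Ico_succ_top hN, Finset.sum_Ico_succ_top hN]
    have := hS.half_quad_sub_half_quad_add (q N N) (q (N - 1) N)
    simp only [Nat.add_sub_cancel]
    linarith

end Matrix.IsSymm

section DG

variable {d N : ℕ} {t : ℕ → ℝ} {M D A : Matrix (Fin d) (Fin d) ℝ}

theorem dgB_mulVec_self_eq_rhoSq (hM : M.IsSymm) (hA : A.IsSymm) (hN : 1 ≤ N)
    {u v : ℕ → ℝ → Fin d → ℝ} (hu : ∀ k, ContDiff ℝ 1 (u k))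
    (hv : ∀ k, ContDiff ℝ 1 (v k)) :
    dgB d N t M D A u v (fun k s => A *ᵥ u k s) v = rhoSq d N t M D A u v := by
  have hslabs := Finset.sum_congr rfl fun k (_ : k ∈ Finset.range N) =>
    integral_slab_energy (D := D) hM hA (hu k) (hv k) (t k) (t (k + 1))
  rw [Finset.sum_add_distrib, Finset.sum_add_distrib, Finset.sum_add_distrib] at hslabs
  have hjumps : ∑ k ∈ Finset.Ico 1 N, M *ᵥ (v k (t k) - v (k - 1) (t k)) ⬝ᵥ v k (t k)
      = ∑ k ∈ Finset.Ico 1 N, (v k (t k) - v (k - 1) (t k)) ⬝ᵥ M *ᵥ v k (t k) :=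
    Finset.sum_congr rfl fun k _ => by rw [dotProduct_comm, hM.dotProduct_mulVec_comm]
  have hA' := hA.dg_jump_telescope hN fun k m => u k (t m)
  have hM' := hM.dg_jump_telescope hN fun k m => v k (t m)
  rw [dgB, rhoSq, hjumps, dotProduct_comm (M *ᵥ v 0 (t 0))]
  linarith

end DG

namespace IsPwPoly

variable {d : ℕ} {r : ℕ → ℕ} {u : ℕ → ℝ → Fin d → ℝ}

theorem contDiff (hu : IsPwPoly d r u) (k : ℕ) (m : WithTop ℕ∞) : ContDiff ℝ m (u k) := by
  obtain ⟨p, -, hp⟩ := hu k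
  refine contDiff_pi.2 fun i => ?_
  simp_rw [hp]
  exact (p i).contDiff_aeval m

theorem mulVec (hu : IsPwPoly d r u) (S : Matrix (Fin d) (Fin d) ℝ) :
    IsPwPoly d r fun k s => S *ᵥ u k s := by
  intro k
  obtain ⟨p, hdeg, hp⟩ := hu k
  refine ⟨fun i => ∑ j, Polynomial.C (S i j) * p j, fun i => ?_, fun s i => ?_⟩
  · exact Polynomial.natDegree_sum_le_of_forall_le _ _ fun j _ =>
      (Polynomial.natDegree_C_mul_le _ _).trans (hdeg j)
  · simp [Matrix.mulVec, dotProduct, hp, Polynomial.eval_finsetSum]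

end IsPwPoly

theorem MeasureTheory.MemLp.integrable_mulVec_dotProduct {n α : Type*} [Fintype n]
    [MeasurableSpace α] {μ : Measure α} {f : α → n → ℝ} (hf : MemLp f 2 μ)
    (S : Matrix n n ℝ) : Integrable (fun s => S *ᵥ f s ⬝ᵥ f s) μ := by
  simp only [dotProduct, Matrix.mulVec, Finset.sum_mul]
  exact integrable_finsetSum _ fun i _ => integrable_finsetSum _ fun j _ =>
    ((hf.eval j).const_mul (S i j)).integrable_mul (hf.eval i)

theorem integral_dotProduct_le_of_posDef {n : Type*} [Fintype n] [DecidableEq n]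
    {D : Matrix n n ℝ} (hD : D.PosDef) {a b : ℝ} (hab : a ≤ b) {f v : ℝ → n → ℝ}
    (hf : MemLp f 2 (volume.restrict (Set.Ioc a b))) (hv : Continuous v) :
    ∫ s in a..b, f s ⬝ᵥ v s
      ≤ (∫ s in a..b, D⁻¹ *ᵥ f s ⬝ᵥ f s)
        + 1 / 4 * ∫ s in a..b, v s ⬝ᵥ D *ᵥ v s := by
  have hfv : IntervalIntegrable (fun s => f s ⬝ᵥ v s) volume a b := by
    have hi : ∀ i, IntervalIntegrable (fun s => f s i * v s i) volume a b := fun i =>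
      ((intervalIntegrable_iff_integrableOn_Ioc_of_le hab).2
        ((hf.eval i).integrable one_le_two)).mul_continuousOn
        ((continuous_apply i).comp hv).continuousOn
    simpa [dotProduct, Finset.sum_fn] using IntervalIntegrable.sum Finset.univ fun i _ => hi i
  have hfDf : IntervalIntegrable (fun s => D⁻¹ *ᵥ f s ⬝ᵥ f s) volume a b :=
    (intervalIntegrable_iff_integrableOn_Ioc_of_le hab).2 (hf.integrable_mulVec_dotProduct _)
  have hvDv : IntervalIntegrable (fun s => v s ⬝ᵥ D *ᵥ v s) volume a b :=
    (hv.dotProduct (continuous_const.matrix_mulVec hv)).intervalIntegrable a b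
  rw [← intervalIntegral.integral_const_mul, ← intervalIntegral.integral_add hfDf
    (hvDv.const_mul _)]
  exact intervalIntegral.integral_mono_on hab hfv (hfDf.add (hvDv.const_mul _))
    fun s _ => hD.dotProduct_le (f s) (v s)

theorem Set.Ioc_subset_Ioc_of_le_succ {α : Type*} [Preorder α] {t : ℕ → α} {N k : ℕ}
    (ht : ∀ j < N, t j ≤ t (j + 1)) (hk : k < N) :
    Set.Ioc (t k) (t (k + 1)) ⊆ Set.Ioc (t 0) (t N) := by
  have hmono : MonotoneOn t (Set.Iic N) :=
    monotoneOn_of_le_succ Set.ordConnected_Iic fun j _ _ hj =>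
      ht j (Order.succ_eq_add_one j ▸ hj : j + 1 ≤ N)
  exact Set.Ioc_subset_Ioc (hmono (Nat.zero_le N) hk.le (Nat.zero_le k))
    (hmono (hk : k + 1 ≤ N) (le_refl N) hk)

section Stability

variable {d N : ℕ} {t : ℕ → ℝ} {M D A : Matrix (Fin d) (Fin d) ℝ}

theorem sum_integral_add_initial_le_two_mul_rhoSq (hM : M.PosSemidef) (hD : D.PosSemidef)
    (hA : A.PosSemidef) (ht : ∀ k < N, t k ≤ t (k + 1)) (u v : ℕ → ℝ → Fin d → ℝ) :
    (∑ k ∈ Finset.range N, ∫ s in t k..t (k + 1), v k s ⬝ᵥ D *ᵥ v k s)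
      + v 0 (t 0) ⬝ᵥ M *ᵥ v 0 (t 0) + u 0 (t 0) ⬝ᵥ A *ᵥ u 0 (t 0)
      ≤ 2 * rhoSq d N t M D A u v := by
  have hq : ∀ {S : Matrix (Fin d) (Fin d) ℝ}, S.PosSemidef → ∀ x, 0 ≤ x ⬝ᵥ S *ᵥ x :=
    fun hS x => by simpa using hS.dotProduct_mulVec_nonneg x
  have hdiss : 0 ≤ ∑ k ∈ Finset.range N, ∫ s in t k..t (k + 1), v k s ⬝ᵥ D *ᵥ v k s :=
    Finset.sum_nonneg fun k hk =>
      intervalIntegral.integral_nonneg (ht k (Finset.mem_range.1 hk)) fun s _ => hq hD _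
  have hvjumps := Finset.sum_nonneg fun k (_ : k ∈ Finset.Ico 1 N) =>
    hq hM (v k (t k) - v (k - 1) (t k))
  have hujumps := Finset.sum_nonneg fun k (_ : k ∈ Finset.Ico 1 N) =>
    hq hA (u k (t k) - u (k - 1) (t k))
  have hvT := hq hM (v (N - 1) (t N))
  have huT := hq hA (u (N - 1) (t N))
  rw [rhoSq]
  linarith

theorem sum_integral_dotProduct_add_initial_le (hM : M.PosSemidef) (hD : D.PosDef)
    (hA : A.PosSemidef) (ht : ∀ k < N, t k ≤ t (k + 1)) {f : ℝ → Fin d → ℝ}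
    (hf : ∀ k < N, MemLp f 2 (volume.restrict (Set.Ioc (t k) (t (k + 1)))))
    (u₀ v₀ : Fin d → ℝ) {u v : ℕ → ℝ → Fin d → ℝ}
    (hv : ∀ k, Continuous (v k)) :
    (∑ k ∈ Finset.range N, ∫ s in t k..t (k + 1), f s ⬝ᵥ v k s)
        + M *ᵥ v₀ ⬝ᵥ v 0 (t 0) + u₀ ⬝ᵥ A *ᵥ u 0 (t 0)
      ≤ (∑ k ∈ Finset.range N, ∫ s in t k..t (k + 1), D⁻¹ *ᵥ f s ⬝ᵥ f s)
          + u₀ ⬝ᵥ A *ᵥ u₀ + v₀ ⬝ᵥ M *ᵥ v₀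
        + 1 / 4 * ((∑ k ∈ Finset.range N, ∫ s in t k..t (k + 1), v k s ⬝ᵥ D *ᵥ v k s)
          + v 0 (t 0) ⬝ᵥ M *ᵥ v 0 (t 0) + u 0 (t 0) ⬝ᵥ A *ᵥ u 0 (t 0)) := by
  have hslabs : (∑ k ∈ Finset.range N, ∫ s in t k..t (k + 1), f s ⬝ᵥ v k s)
      ≤ ∑ k ∈ Finset.range N, ((∫ s in t k..t (k + 1), D⁻¹ *ᵥ f s ⬝ᵥ f s)
        + 1 / 4 * ∫ s in t k..t (k + 1), v k s ⬝ᵥ D *ᵥ v k s) :=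
    Finset.sum_le_sum fun k hk =>
      integral_dotProduct_le_of_posDef hD (ht k (Finset.mem_range.1 hk))
        (hf k (Finset.mem_range.1 hk)) (hv k)
  have hv₀ := hM.dotProduct_mulVec_le v₀ (v 0 (t 0))
  rw [hM.isSymm.dotProduct_mulVec_comm, ← dotProduct_comm] at hv₀
  have hu₀ := hA.dotProduct_mulVec_le u₀ (u 0 (t 0))
  rw [Finset.sum_add_distrib, ← Finset.mul_sum] at hslabs
  linarith

end Stability

/-- Stability of the dG1 scheme: `|(u_dG, v_dG)|_ℬ² ≤ C (Σ_n ‖D^{-1/2} f‖²_{L²(I_n)}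
+ |A^{1/2} u₀|² + |M^{1/2} v₀|²)`, with `C` independent of the partition, the
time steps, and the polynomial degrees `r n ≥ 1`.  Note
`‖D^{-1/2} f‖² = f ⬝ᵥ D⁻¹ f`, `|A^{1/2} u₀|² = u₀ ⬝ᵥ A u₀`,
`|M^{1/2} v₀|² = v₀ ⬝ᵥ M v₀`. -/
theorem stmt17 (d : ℕ) (M D A : Matrix (Fin d) (Fin d) ℝ)
    (hM : M.PosDef) (hD : D.PosDef) (hA : A.PosSemidef) :
    ∃ C > (0 : ℝ), ∀ (N : ℕ), 1 ≤ N → ∀ (t : ℕ → ℝ) (T : ℝ),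
      t 0 = 0 → t N = T → (∀ n < N, t n < t (n + 1)) →
      ∀ r : ℕ → ℕ, (∀ n, 1 ≤ r n) →
      ∀ f : ℝ → Fin d → ℝ,
        MeasureTheory.MemLp f 2 (volume.restrict (Set.Ioc (0 : ℝ) T)) →
      ∀ (u₀ v₀ : Fin d → ℝ) (uh vh : ℕ → ℝ → Fin d → ℝ),
        IsPwPoly d r uh → IsPwPoly d r vh →
        (∀ w z : ℕ → ℝ → Fin d → ℝ, IsPwPoly d r w → IsPwPoly d r z →
          dgB d N t M D A uh vh w z
            = (∑ n ∈ Finset.range N, ∫ s in (t n)..(t (n + 1)), f s ⬝ᵥ z n s)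
              + M.mulVec v₀ ⬝ᵥ z 0 (t 0) + u₀ ⬝ᵥ w 0 (t 0)) →
        rhoSq d N t M D A uh vh
          ≤ C * ((∑ n ∈ Finset.range N,
                ∫ s in (t n)..(t (n + 1)), D⁻¹.mulVec (f s) ⬝ᵥ f s)
              + u₀ ⬝ᵥ A.mulVec u₀ + v₀ ⬝ᵥ M.mulVec v₀) := by
  refine ⟨2, two_pos, fun N hN t T ht₀ htN hlt r _ f hf u₀ v₀ uh vh hu hv hdG => ?_⟩
  have ht : ∀ k < N, t k ≤ t (k + 1) := fun k hk => (hlt k hk).le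
  have hfslab : ∀ k < N, MemLp f 2 (volume.restrict (Set.Ioc (t k) (t (k + 1)))) :=
    fun k hk => hf.mono_measure <| Measure.restrict_mono
      (ht₀ ▸ htN ▸ Set.Ioc_subset_Ioc_of_le_succ ht hk) le_rfl
  have henergy := hdG _ vh (hu.mulVec A) hv
  rw [dgB_mulVec_self_eq_rhoSq hM.posSemidef.isSymm hA.isSymm hN (fun k => hu.contDiff k 1)
    (fun k => hv.contDiff k 1)] at henergy
  have hrhs := sum_integral_dotProduct_add_initial_le hM.posSemidef hD hA ht hfslab u₀ v₀
    (u := uh) fun k => (hv.contDiff k 0).continuous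
  have hlower :=
    sum_integral_add_initial_le_two_mul_rhoSq hM.posSemidef hD.posSemidef hA ht uh vh
  linarith
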